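/- In ℚ(q), the identity ((1−q¹⁵)/(1−q) − (1−q³)/(1−q)) + ((1−q³)/(1−q))²·((1−q¹³)/(1−q) − 1) + T(5) = q¹⁷ + 2q¹⁶ + 5q¹⁵ + 9q¹⁴ + 11q¹³ + 11q¹² + 10q¹¹ + 10q¹⁰ + 9q⁹ + 10q⁸ + 10q⁷ + 12q⁶ + 12q⁵ + 12q⁴ + 9q³ + 5q² + 2q + 1 holds; the right-hand side is the virtual Poincaré polynomial of the moduli space M_{ℙ²}(4m+2) of semistable one-dimensional sheaves on ℙ² with Hilbert polynomial 4m+2. -/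

import Mathlib

open RatFunc

/-- The variable `q` of the field of rational functions `ℚ(q)`. -/
noncomputable def q : RatFunc ℚ := RatFunc.X

/-- Virtual Poincaré polynomial of the moduli space of degree-2 stable maps to
`Gr(n-1, n+1)`. -/
noncomputable def A (n : ℕ) : RatFunc ℚ :=
  ((1 + q ^ (n + 1)) * (1 + q ^ 3) - q * (1 + q) * (q ^ 2 + q ^ (n - 1))) *
      ((1 - q ^ (n + 1)) * (1 - q ^ n) * (1 - q ^ (n - 1))) /
    ((1 - q) ^ 3 * (1 - q ^ 2) ^ 2)

/-- Virtual Poincaré polynomial of the moduli space of degree-2 stable maps to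
`ℙ^{n-1}`. -/
noncomputable def B (n : ℕ) : RatFunc ℚ :=
  (1 - q ^ (n + 1)) * (1 - q ^ n) * (1 - q ^ (n - 1)) / ((1 - q) ^ 2 * (1 - q ^ 2))

/-- Virtual Poincaré polynomial of the locus of rank-2 quadrics in
`ℙ(Sym²(ℂ^{n+1})*)`. -/
noncomputable def C (n : ℕ) : RatFunc ℚ :=
  (1 / 2) * (((1 - q ^ (n + 1)) / (1 - q)) ^ 2 + (1 - q ^ (2 * n + 2)) / (1 - q ^ 2)) -
    (1 - q ^ (n + 1)) / (1 - q)

/-- Virtual Poincaré polynomial of the double symmetroid `T₄` (equivalently, of the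
Kronecker moduli space `ℙ((ℂ^{n+1})* ⊗ gl₂)//SL₂×SL₂`). -/
noncomputable def T (n : ℕ) : RatFunc ℚ :=
  A n - (B n - 1) * ((1 - q ^ (n + 1)) / (1 - q)) -
    (((1 - q ^ (n - 1)) / (1 - q)) ^ 2 - 1) * C n

/-!
Every denominator is a product of factors `1 - q ^ k` with `k ≠ 0`, which do not vanish in `ℚ(q)`
(the polynomial `1 - X ^ k` takes the value `1` at `0`). Clearing them turns the computation of
`T 5`, and then the whole identity, into polynomial identities in `q`.
-/

theorem one_sub_q_pow_ne_zero {k : ℕ} (hk : k ≠ 0) : (1 : RatFunc ℚ) - q ^ k ≠ 0 := by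
  have hpoly : (1 : RatFunc ℚ) - q ^ k =
      algebraMap (Polynomial ℚ) (RatFunc ℚ) (1 - Polynomial.X ^ k) := by
    simp [q]
  rw [hpoly]
  refine RatFunc.algebraMap_ne_zero fun h => ?_
  simpa [hk] using congrArg (Polynomial.eval 0) h

theorem one_sub_q_ne_zero : (1 : RatFunc ℚ) - q ≠ 0 := by
  simpa using one_sub_q_pow_ne_zero one_ne_zero

theorem T_five :
    T 5 = q ^ 17 + q ^ 16 + 2 * q ^ 15 + 2 * q ^ 14 + 2 * q ^ 13 + q ^ 12 - q ^ 9 +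
      2 * q ^ 6 + 2 * q ^ 5 + 3 * q ^ 4 + 2 * q ^ 3 + 2 * q ^ 2 + q + 1 := by
  have hq := one_sub_q_ne_zero
  have hq2 := one_sub_q_pow_ne_zero two_ne_zero
  simp only [T, A, B, _root_.C]
  norm_num
  field_simp
  ring

/-- The wall-crossing computation of the virtual Poincaré polynomial of the moduli
space `M_{ℙ²}(4m+2)`:
`(P(ℙ¹⁴) − P(ℙ²)) + P(ℙ²×ℙ²)(P(ℙ¹²) − 1) + P(T₄(5))` equals the stated polynomial. -/
theorem virtual_poincare_M_P2_4m_2 :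
    ((1 - q ^ 15) / (1 - q) - (1 - q ^ 3) / (1 - q)) +
        ((1 - q ^ 3) / (1 - q)) ^ 2 * ((1 - q ^ 13) / (1 - q) - 1) + T 5 =
      q ^ 17 + 2 * q ^ 16 + 5 * q ^ 15 + 9 * q ^ 14 + 11 * q ^ 13 + 11 * q ^ 12 +
        10 * q ^ 11 + 10 * q ^ 10 + 9 * q ^ 9 + 10 * q ^ 8 + 10 * q ^ 7 +
        12 * q ^ 6 + 12 * q ^ 5 + 12 * q ^ 4 + 9 * q ^ 3 + 5 * q ^ 2 + 2 * q + 1 := by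
  have hq := one_sub_q_ne_zero
  rw [T_five]
  field_simp
  ring
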